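/- Let m : ℝ^d → (0,∞) be a smooth positive density, E, S : ℝ^d → ℝ smooth, J : ℝ^d → Mat(d,ℝ) smooth, and K : ℝ^d → Mat(d,ℝ) smooth with K(x) symmetric for all x. Let ρ : ℝ^d → (0,∞) be smooth and positive and φ : ℝ^d → ℝ smooth with compact support. Then ∫_{ℝ^d} (Lφ)(x) ρ(x) m(x) dx = ∫_{ℝ^d} ⟨∇E(x), J(x)∇φ(x)⟩ ρ(x) m(x) dx + ∫_{ℝ^d} ⟨∇(S − log ρ)(x), K(x)∇φ(x)⟩ ρ(x) m(x) dx, where Lφ := ⟨∇E, J∇φ⟩ + ⟨∇S, K∇φ⟩ + div_m(K∇φ). -/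

import Mathlib

open MeasureTheory Real Matrix

/-- Gradient of `f : ℝ^d → ℝ` w.r.t. the standard inner product. -/
noncomputable def grad {d : ℕ} (f : (Fin d → ℝ) → ℝ) (x : Fin d → ℝ) : Fin d → ℝ :=
  fun i => fderiv ℝ f x (Pi.single i 1)

/-- Partial derivative `∂_{x_k} g (x)`. -/
noncomputable def pd {d : ℕ} (k : Fin d) (g : (Fin d → ℝ) → ℝ) (x : Fin d → ℝ) : ℝ :=
  fderiv ℝ g x (Pi.single k 1)

/-- Divergence of a vector field on ℝ^d: `div X = Σ_k ∂_{x_k} X_k`. -/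
noncomputable def vdiv {d : ℕ} (X : (Fin d → ℝ) → (Fin d → ℝ)) (x : Fin d → ℝ) : ℝ :=
  ∑ k, fderiv ℝ (fun y => X y k) x (Pi.single k 1)

/-!
Write `V = K ∇φ`. The product rule gives `ρ div(m V) = div(ρ m V) - m ⟨∇ρ, V⟩`, and
`⟨∇ log ρ, V⟩ ρ m = m ⟨∇ρ, V⟩`, so pointwise
`(Lφ) ρ m = ⟨∇E, J ∇φ⟩ ρ m + ⟨∇(S - log ρ), V⟩ ρ m + div(ρ m V)`.
The last term integrates to zero: each `∂ₖ` of a compactly supported `C¹` function does, by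
integration by parts against the constant `1`.
-/

theorem integrable_fderiv_apply {E : Type*} [NormedAddCommGroup E] [NormedSpace ℝ E]
    [MeasurableSpace E] [OpensMeasurableSpace E] {μ : Measure E} [IsFiniteMeasureOnCompacts μ]
    {g : E → ℝ} (hg : ContDiff ℝ 1 g) (hgc : HasCompactSupport g) (v : E) :
    Integrable (fun x => fderiv ℝ g x v) μ :=
  ((hg.continuous_fderiv one_ne_zero).clm_apply continuous_const).integrable_of_hasCompactSupport
    ((hgc.fderiv ℝ).comp_left (g := fun L : E →L[ℝ] ℝ => L v) rfl)

theorem integral_fderiv_apply_eq_zero {E : Type*} [NormedAddCommGroup E] [NormedSpace ℝ E]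
    [FiniteDimensional ℝ E] [MeasurableSpace E] [BorelSpace E] {μ : Measure E}
    [μ.IsAddHaarMeasure] {g : E → ℝ} (hg : ContDiff ℝ 1 g) (hgc : HasCompactSupport g) (v : E) :
    ∫ x, fderiv ℝ g x v ∂μ = 0 := by
  simpa using integral_mul_fderiv_eq_neg_fderiv_mul_of_integrable (μ := μ)
    (f := fun _ => (1 : ℝ)) (g := g) (v := v) (by simp)
    (by simpa using integrable_fderiv_apply hg hgc v)
    (by simpa using hg.continuous.integrable_of_hasCompactSupport hgc)
    (fun x _ => differentiableAt_const _) (fun x _ => hg.differentiable one_ne_zero x)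

theorem Continuous.integrable_dotProduct_mul {X ι : Type*} [TopologicalSpace X]
    [MeasurableSpace X] [OpensMeasurableSpace X] {μ : Measure X} [IsFiniteMeasureOnCompacts μ]
    [Fintype ι] {u V : X → ι → ℝ} {w : X → ℝ} (hu : Continuous u) (hV : Continuous V)
    (hw : Continuous w) (hVc : HasCompactSupport V) :
    Integrable (fun x => (u x ⬝ᵥ V x) * w x) μ :=
  ((hu.dotProduct hV).mul hw).integrable_of_hasCompactSupport <|
    hVc.mono <| Function.support_subset_iff'.2 fun x hx => by
      simp [Function.notMem_support.1 hx]

theorem contDiff_matrix_mulVec {E ι κ : Type*} [NormedAddCommGroup E] [NormedSpace ℝ E]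
    [Fintype ι] [Fintype κ] {n : WithTop ℕ∞} {A : E → Matrix κ ι ℝ} {v : E → ι → ℝ}
    (hA : ∀ i j, ContDiff ℝ n fun x => A x i j) (hv : ContDiff ℝ n v) :
    ContDiff ℝ n fun x => (A x).mulVec (v x) :=
  contDiff_pi.2 fun i => ContDiff.sum fun j _ => (hA i j).mul (contDiff_pi.1 hv j)

theorem HasCompactSupport.matrix_mulVec {X ι κ : Type*} [TopologicalSpace X] [Fintype ι]
    {A : X → Matrix κ ι ℝ} {v : X → ι → ℝ} (hv : HasCompactSupport v) :
    HasCompactSupport fun x => (A x).mulVec (v x) :=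
  hv.mono <| Function.support_subset_iff'.2 fun x hx => by
    simp [Function.notMem_support.1 hx]

section Euclidean

variable {d : ℕ}

theorem contDiff_grad {n : WithTop ℕ∞} {f : (Fin d → ℝ) → ℝ} (hf : ContDiff ℝ (n + 1) f) :
    ContDiff ℝ n (grad f) :=
  contDiff_pi.2 fun _ => (hf.fderiv_right le_rfl).clm_apply contDiff_const

theorem continuous_grad {f : (Fin d → ℝ) → ℝ} (hf : ContDiff ℝ 1 f) : Continuous (grad f) :=
  continuous_pi fun _ => (hf.continuous_fderiv one_ne_zero).clm_apply continuous_const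

theorem HasCompactSupport.grad {f : (Fin d → ℝ) → ℝ} (hf : HasCompactSupport f) :
    HasCompactSupport (grad f) :=
  (hf.fderiv ℝ).mono <| Function.support_subset_iff'.2 fun x hx => by
    ext i; simp [_root_.grad, Function.notMem_support.1 hx]

theorem grad_sub_log {S ρ : (Fin d → ℝ) → ℝ} {x : Fin d → ℝ} (hS : DifferentiableAt ℝ S x)
    (hρ : DifferentiableAt ℝ ρ x) (hρx : ρ x ≠ 0) :
    grad (fun y => S y - Real.log (ρ y)) x = grad S x - (ρ x)⁻¹ • grad ρ x := by
  have hlog : HasFDerivAt (fun y => Real.log (ρ y)) ((ρ x)⁻¹ • fderiv ℝ ρ x) x :=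
    (Real.hasDerivAt_log hρx).comp_hasFDerivAt x hρ.hasFDerivAt
  ext i
  simp [grad, (hS.hasFDerivAt.fun_sub hlog).fderiv]

theorem vdiv_mul {f : (Fin d → ℝ) → ℝ} {X : (Fin d → ℝ) → Fin d → ℝ} {x : Fin d → ℝ}
    (hf : DifferentiableAt ℝ f x) (hX : ∀ k, DifferentiableAt ℝ (fun y => X y k) x) :
    vdiv (fun y k => f y * X y k) x = f x * vdiv X x + grad f x ⬝ᵥ X x := by
  simp only [vdiv, grad, dotProduct, Finset.mul_sum, ← Finset.sum_add_distrib]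
  refine Finset.sum_congr rfl fun k _ => ?_
  rw [fderiv_fun_mul hf (hX k)]
  simp only [_root_.add_apply, _root_.smul_apply, smul_eq_mul]
  ring

theorem integrable_vdiv {X : (Fin d → ℝ) → Fin d → ℝ} (hX : ContDiff ℝ 1 X)
    (hXc : HasCompactSupport X) : Integrable (vdiv X) :=
  integrable_finsetSum _ fun k _ => integrable_fderiv_apply (contDiff_pi.1 hX k)
    (hXc.comp_left (g := fun v : Fin d → ℝ => v k) rfl) _

theorem integral_vdiv_eq_zero {X : (Fin d → ℝ) → Fin d → ℝ} (hX : ContDiff ℝ 1 X)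
    (hXc : HasCompactSupport X) : ∫ x, vdiv X x = 0 := by
  have hXk : ∀ k, ContDiff ℝ 1 fun y => X y k := contDiff_pi.1 hX
  have hXkc : ∀ k, HasCompactSupport fun y => X y k := fun k =>
    hXc.comp_left (g := fun v : Fin d → ℝ => v k) rfl
  unfold vdiv
  rw [integral_finsetSum _ fun k _ => integrable_fderiv_apply (hXk k) (hXkc k) _]
  exact Finset.sum_eq_zero fun k _ => integral_fderiv_apply_eq_zero (hXk k) (hXkc k) _

theorem dotProduct_add_vdiv_div_mul_eq {S ρ m : (Fin d → ℝ) → ℝ} {V : (Fin d → ℝ) → Fin d → ℝ}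
    {x : Fin d → ℝ} (hS : DifferentiableAt ℝ S x) (hρ : DifferentiableAt ℝ ρ x) (hρx : ρ x ≠ 0)
    (hmV : ∀ k, DifferentiableAt ℝ (fun y => m y * V y k) x) (hmx : m x ≠ 0) :
    (grad S x ⬝ᵥ V x + vdiv (fun y k => m y * V y k) x / m x) * (ρ x * m x)
      = (grad (fun y => S y - Real.log (ρ y)) x ⬝ᵥ V x) * (ρ x * m x)
        + vdiv (fun y k => ρ y * (m y * V y k)) x := by
  have hmV_dot : grad ρ x ⬝ᵥ (fun k => m x * V x k) = m x * (grad ρ x ⬝ᵥ V x) :=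
    dotProduct_smul (m x) (grad ρ x) (V x)
  rw [grad_sub_log hS hρ hρx, vdiv_mul hρ hmV, hmV_dot, sub_dotProduct, smul_dotProduct,
    smul_eq_mul]
  field_simp
  ring

theorem integral_add_dotProduct_add_vdiv_div_mul {a S ρ m : (Fin d → ℝ) → ℝ}
    {V : (Fin d → ℝ) → Fin d → ℝ} (ha : Integrable fun x => a x * (ρ x * m x))
    (hS : ContDiff ℝ 1 S) (hρ : ContDiff ℝ 1 ρ) (hρ0 : ∀ x, ρ x ≠ 0) (hm : ContDiff ℝ 1 m)
    (hm0 : ∀ x, m x ≠ 0) (hV : ContDiff ℝ 1 V) (hVc : HasCompactSupport V) :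
    ∫ x, (a x + grad S x ⬝ᵥ V x + vdiv (fun y k => m y * V y k) x / m x) * (ρ x * m x)
      = (∫ x, a x * (ρ x * m x))
        + ∫ x, (grad (fun y => S y - Real.log (ρ y)) x ⬝ᵥ V x) * (ρ x * m x) := by
  have hflux : ContDiff ℝ 1 fun y k => ρ y * (m y * V y k) :=
    contDiff_pi.2 fun k => hρ.mul (hm.mul (contDiff_pi.1 hV k))
  have hfluxc : HasCompactSupport fun y k => ρ y * (m y * V y k) :=
    hVc.mono <| Function.support_subset_iff'.2 fun x hx => by
      ext k; simp [Function.notMem_support.1 hx]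
  have hdissipation : Integrable fun x =>
      (grad (fun y => S y - Real.log (ρ y)) x ⬝ᵥ V x) * (ρ x * m x) :=
    (continuous_grad (hS.sub (hρ.log hρ0))).integrable_dotProduct_mul hV.continuous
      (hρ.continuous.mul hm.continuous) hVc
  have hpointwise : ∀ x,
      (a x + grad S x ⬝ᵥ V x + vdiv (fun y k => m y * V y k) x / m x) * (ρ x * m x)
        = a x * (ρ x * m x) + (grad (fun y => S y - Real.log (ρ y)) x ⬝ᵥ V x) * (ρ x * m x)
          + vdiv (fun y k => ρ y * (m y * V y k)) x := fun x => by
    rw [add_assoc, add_mul, dotProduct_add_vdiv_div_mul_eq (hS.differentiable one_ne_zero x)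
      (hρ.differentiable one_ne_zero x) (hρ0 x) (fun k => (hm.differentiable one_ne_zero x).mul
        ((contDiff_pi.1 hV k).differentiable one_ne_zero x)) (hm0 x), add_assoc]
  rw [integral_congr_ae (.of_forall hpointwise), integral_add _ (integrable_vdiv hflux hfluxc),
    integral_add ha hdissipation, integral_vdiv_eq_zero hflux hfluxc, add_zero]
  exact ha.add hdissipation

end Euclidean

theorem fokker_planck_is_generic_general {d : ℕ}
    (m : (Fin d → ℝ) → ℝ) (E S : (Fin d → ℝ) → ℝ)
    (J K : (Fin d → ℝ) → Matrix (Fin d) (Fin d) ℝ)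
    (ρ : (Fin d → ℝ) → ℝ) (φ : (Fin d → ℝ) → ℝ)
    (hm : ContDiff ℝ (⊤ : ℕ∞) m) (hmpos : ∀ x, 0 < m x)
    (hE : ContDiff ℝ (⊤ : ℕ∞) E) (hS : ContDiff ℝ (⊤ : ℕ∞) S)
    (hJ : ∀ i j, ContDiff ℝ (⊤ : ℕ∞) fun x => J x i j)
    (hK : ∀ i j, ContDiff ℝ (⊤ : ℕ∞) fun x => K x i j)
    (hρ : ContDiff ℝ (⊤ : ℕ∞) ρ) (hρpos : ∀ x, 0 < ρ x)
    (hφ : ContDiff ℝ (⊤ : ℕ∞) φ) (hφc : HasCompactSupport φ) :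
    ∫ x, (grad E x ⬝ᵥ (J x).mulVec (grad φ x)
          + grad S x ⬝ᵥ (K x).mulVec (grad φ x)
          + vdiv (fun y k => m y * (K y).mulVec (grad φ y) k) x / m x) * (ρ x * m x)
      = (∫ x, (grad E x ⬝ᵥ (J x).mulVec (grad φ x)) * (ρ x * m x))
        + ∫ x, (grad (fun y => S y - Real.log (ρ y)) x ⬝ᵥ (K x).mulVec (grad φ x))
            * (ρ x * m x) := by
  have hgradφ : ContDiff ℝ 1 (grad φ) := contDiff_grad (contDiff_infty.1 hφ 2)
  have hhamiltonian : Integrable fun x => (grad E x ⬝ᵥ (J x).mulVec (grad φ x)) * (ρ x * m x) :=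
    (continuous_grad (contDiff_infty.1 hE 1)).integrable_dotProduct_mul
      (contDiff_matrix_mulVec (fun i j => contDiff_infty.1 (hJ i j) 1) hgradφ).continuous
      (hρ.continuous.mul hm.continuous) hφc.grad.matrix_mulVec
  exact integral_add_dotProduct_add_vdiv_div_mul hhamiltonian (contDiff_infty.1 hS 1)
    (contDiff_infty.1 hρ 1) (fun x => (hρpos x).ne') (contDiff_infty.1 hm 1)
    (fun x => (hmpos x).ne')
    (contDiff_matrix_mulVec (fun i j => contDiff_infty.1 (hK i j) 1) hgradφ)
    hφc.grad.matrix_mulVec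

/-- the Fokker–Planck evolution is a deterministic GENERIC equation:
`∫ (Lφ) ρ m dx = ∫ ⟨∇E, J∇φ⟩ ρ m dx + ∫ ⟨∇(S − log ρ), K∇φ⟩ ρ m dx`, where
`Lφ = ⟨∇E, J∇φ⟩ + ⟨∇S, K∇φ⟩ + div_m(K∇φ)`. -/
theorem fokker_planck_is_generic {d : ℕ}
    (m : (Fin d → ℝ) → ℝ) (E S : (Fin d → ℝ) → ℝ)
    (J K : (Fin d → ℝ) → Matrix (Fin d) (Fin d) ℝ)
    (ρ : (Fin d → ℝ) → ℝ) (φ : (Fin d → ℝ) → ℝ)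
    (hm : ContDiff ℝ (⊤ : ℕ∞) m) (hmpos : ∀ x, 0 < m x)
    (hE : ContDiff ℝ (⊤ : ℕ∞) E) (hS : ContDiff ℝ (⊤ : ℕ∞) S)
    (hJ : ∀ i j, ContDiff ℝ (⊤ : ℕ∞) fun x => J x i j)
    (hK : ∀ i j, ContDiff ℝ (⊤ : ℕ∞) fun x => K x i j)
    (hKsym : ∀ x, (K x)ᵀ = K x)
    (hρ : ContDiff ℝ (⊤ : ℕ∞) ρ) (hρpos : ∀ x, 0 < ρ x)
    (hφ : ContDiff ℝ (⊤ : ℕ∞) φ) (hφc : HasCompactSupport φ) :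
    ∫ x, (grad E x ⬝ᵥ (J x).mulVec (grad φ x)
          + grad S x ⬝ᵥ (K x).mulVec (grad φ x)
          + vdiv (fun y k => m y * (K y).mulVec (grad φ y) k) x / m x) * (ρ x * m x)
      = (∫ x, (grad E x ⬝ᵥ (J x).mulVec (grad φ x)) * (ρ x * m x))
        + ∫ x, (grad (fun y => S y - Real.log (ρ y)) x ⬝ᵥ (K x).mulVec (grad φ x))
            * (ρ x * m x) :=
  fokker_planck_is_generic_general m E S J K ρ φ hm hmpos hE hS hJ hK hρ hρpos hφ hφc
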